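/- For all real numbers $p \in [1,2]$ and all $x \le 1$, one has $0 \le (1-x)^p - (1 - p x) \le \frac{p^2}{4} x^2$. -/

import Mathlib

/-!
The lower bound is Bernoulli's inequality for exponents `p ≥ 1`. For the upper bound, the reverse
Bernoulli inequality with exponent `p / 2 ≤ 1` gives `(1 - x) ^ (p / 2) ≤ 1 - p / 2 * x`; squaring it
yields `(1 - x) ^ p ≤ (1 - p / 2 * x) ^ 2 = 1 - p * x + p ^ 2 / 4 * x ^ 2`.
-/

theorem rpow_one_sub_le_sq_one_sub_half_mul {p x : ℝ} (hp0 : 0 ≤ p) (hp2 : p ≤ 2) (hx : x ≤ 1) :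
    (1 - x) ^ p ≤ (1 - p / 2 * x) ^ 2 := by
  have hbase : 0 ≤ 1 - x := by linarith
  have hhalf : (1 - x) ^ (p / 2) ≤ 1 - p / 2 * x := by
    simpa [← sub_eq_add_neg] using
      rpow_one_add_le_one_add_mul_self (by linarith : -1 ≤ -x) (by linarith) (by linarith)
  calc (1 - x) ^ p = ((1 - x) ^ (p / 2)) ^ 2 := by
        rw [← Real.rpow_natCast, ← Real.rpow_mul hbase]; norm_num
    _ ≤ (1 - p / 2 * x) ^ 2 := pow_le_pow_left₀ (Real.rpow_nonneg hbase _) hhalf 2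

theorem stmt_0 (p x : ℝ) (hp1 : 1 ≤ p) (hp2 : p ≤ 2) (hx : x ≤ 1) :
    0 ≤ (1 - x) ^ p - (1 - p * x) ∧ (1 - x) ^ p - (1 - p * x) ≤ p ^ 2 / 4 * x ^ 2 := by
  have hlower : 1 - p * x ≤ (1 - x) ^ p := by
    simpa [← sub_eq_add_neg] using one_add_mul_self_le_rpow_one_add (by linarith : -1 ≤ -x) hp1
  have hupper := rpow_one_sub_le_sq_one_sub_half_mul (by linarith) hp2 hx
  constructor
  · linarith
  · linarith [show (1 - p / 2 * x) ^ 2 = 1 - p * x + p ^ 2 / 4 * x ^ 2 by ring]
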